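/- If H is a proper S_0-invariant subgroup of E, then every element of H has the property that each generator a_i appearing in its reduced word appears at least twice. -/

import Mathlib

noncomputable section

abbrev Z2 : Type := Multiplicative (ZMod 2)
abbrev FP : Type := Monoid.CoprodI (fun _ : ℕ => Z2)

def gen (i : ℕ) : FP := Monoid.CoprodI.of (i := i) (Multiplicative.ofAdd (1 : ZMod 2))

def par : FP →* Z2 := Monoid.CoprodI.lift (fun _ => MonoidHom.id Z2)

/-- The subgroup of even-length words. -/
def Ev : Subgroup FP := par.ker

/-- Endomorphism of `FP` identifying letters according to `f`. -/
def ident (f : ℕ → ℕ) : FP →* FP :=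
  Monoid.CoprodI.lift (fun i => (Monoid.CoprodI.of (M := fun _ : ℕ => Z2) (i := f i)))

/-- `f` moves only finitely many letters. -/
def FinSupp (f : ℕ → ℕ) : Prop := ∃ n, ∀ k ≥ n, f k = k

/-- S₀-invariance. -/
def S0Inv (H : Subgroup FP) : Prop :=
  (∀ f : ℕ → ℕ, FinSupp f → ∀ x ∈ H, ident f x ∈ H) ∧
  (∀ k : ℕ, ∀ x ∈ H, gen k * x * gen k ∈ H)

/-- Length of the reduced word of `x`. -/
def wlen (x : FP) : ℕ := (Monoid.CoprodI.Word.equiv x).toList.length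

/-- Number of occurrences of the letter `i` in the reduced word of `x`. -/
def occ (x : FP) (i : ℕ) : ℕ :=
  ((Monoid.CoprodI.Word.equiv x).toList.map Sigma.fst).count i

/-!
Suppose the letter `i` occurs exactly once in the reduced word of some `x ∈ H`. Identifying every
other letter of `x` with a fresh letter `N` maps `x` to `a_N^p a_i a_N^q` with `p + q` odd (as
`x ∈ E`), that is, to `a_i a_N` or `a_N a_i`. Renaming the two letters of this word puts every
`a_j a_k` into `H`, and these products generate `E`, so `H = E`.
-/

lemma List.exists_eq_append_cons_of_count_eq_one {α : Type*} [DecidableEq α] {L : List α}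
    {a : α} (h : L.count a = 1) : ∃ u v, L = u ++ a :: v ∧ a ∉ u ∧ a ∉ v := by
  obtain ⟨u, v, rfl⟩ := List.append_of_mem (List.count_pos_iff.1 (h ▸ one_pos))
  rw [List.count_append, List.count_cons_self] at h
  exact ⟨u, v, rfl, List.count_eq_zero.1 (by omega), List.count_eq_zero.1 (by omega)⟩

lemma gen_mul_self (i : ℕ) : gen i * gen i = 1 := by
  rw [gen, ← map_mul, ← ofAdd_add, (by decide : (1 : ZMod 2) + 1 = 0), ofAdd_zero, map_one]

lemma gen_pow_of_even (i : ℕ) {n : ℕ} (h : Even n) : gen i ^ n = 1 := by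
  obtain ⟨k, rfl⟩ := h
  rw [← two_mul, pow_mul, sq, gen_mul_self, one_pow]

lemma gen_pow_of_odd (i : ℕ) {n : ℕ} (h : Odd n) : gen i ^ n = gen i := by
  obtain ⟨k, rfl⟩ := h
  rw [pow_succ, gen_pow_of_even i (even_two_mul k), one_mul]

lemma ident_gen (f : ℕ → ℕ) (i : ℕ) : ident f (gen i) = gen (f i) := by
  simp [ident, gen]

lemma par_gen (i : ℕ) : par (gen i) = Multiplicative.ofAdd 1 := by
  simp [par, gen]

lemma map_prod_map_gen_of_forall_eq {M : Type*} [Monoid M] (φ : FP →* M) {c : M} {L : List ℕ}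
    (h : ∀ j ∈ L, φ (gen j) = c) : φ (L.map gen).prod = c ^ L.length := by
  rw [map_list_prod, List.map_map, List.map_congr_left (f := φ ∘ gen) (g := fun _ => c) h,
    List.map_const', List.prod_replicate]

lemma prod_map_gen_mem_Ev_iff (L : List ℕ) : (L.map gen).prod ∈ Ev ↔ Even L.length := by
  rw [Ev, MonoidHom.mem_ker, map_prod_map_gen_of_forall_eq par (fun j _ => par_gen j),
    ← ofAdd_nsmul, nsmul_one, ofAdd_eq_one, ZMod.natCast_eq_zero_iff_even]

def letters (x : FP) : List ℕ := (Monoid.CoprodI.Word.equiv x).toList.map Sigma.fst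

lemma prod_map_gen_letters (x : FP) : ((letters x).map gen).prod = x := by
  conv_rhs => rw [← (Monoid.CoprodI.Word.equiv (M := fun _ : ℕ => Z2)).symm_apply_apply x]
  refine congrArg List.prod ?_
  rw [letters, List.map_map]
  refine List.map_congr_left fun l hl => ?_
  have hl2 : l.2 = Multiplicative.ofAdd 1 :=
    (by decide : ∀ a : Z2, a ≠ 1 → a = Multiplicative.ofAdd 1) _
      ((Monoid.CoprodI.Word.equiv x).ne_one l hl)
  simp only [Function.comp_apply, gen, hl2]

lemma prod_map_gen_mem_of_forall_gen_mul_gen_mem {H : Subgroup FP}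
    (hpair : ∀ j k, gen j * gen k ∈ H) :
    ∀ L : List ℕ, Even L.length → (L.map gen).prod ∈ H
  | [], _ => H.one_mem
  | [_], h => absurd h (by simp)
  | j :: k :: t, h => by
      rw [List.map_cons, List.map_cons, List.prod_cons, List.prod_cons, ← mul_assoc]
      exact H.mul_mem (hpair j k)
        (prod_map_gen_mem_of_forall_gen_mul_gen_mem hpair t (by simpa [parity_simps] using h))

lemma Ev_le_of_forall_gen_mul_gen_mem {H : Subgroup FP} (hpair : ∀ j k, gen j * gen k ∈ H) :
    Ev ≤ H := by
  intro x hx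
  rw [← prod_map_gen_letters x] at hx ⊢
  exact prod_map_gen_mem_of_forall_gen_mul_gen_mem hpair _ ((prod_map_gen_mem_Ev_iff _).1 hx)

def collapse (i N n : ℕ) : ℕ := if n = i then i else if n < N then N else n

lemma finSupp_collapse {i N : ℕ} (hi : i < N) : FinSupp (collapse i N) :=
  ⟨N, fun k hk => by simp [collapse, show k ≠ i by omega, show ¬ k < N by omega]⟩

lemma exists_ne_gen_mul_gen_mem_of_count_eq_one {H : Subgroup FP}
    (hident : ∀ f, FinSupp f → ∀ y ∈ H, ident f y ∈ H) {L : List ℕ}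
    (hL : (L.map gen).prod ∈ H) (heven : Even L.length) {i : ℕ} (hi : L.count i = 1) :
    ∃ j k, j ≠ k ∧ gen j * gen k ∈ H := by
  obtain ⟨u, v, rfl, hiu, hiv⟩ := List.exists_eq_append_cons_of_count_eq_one hi
  set N := (u ++ i :: v).sum + 1
  have hlt : ∀ n ∈ u ++ i :: v, n < N := fun n hn => Nat.lt_succ_of_le (List.le_sum_of_mem hn)
  have hiN : i < N := hlt i (by simp)
  have hcollapse (w : List ℕ) (hw : w ⊆ u ++ i :: v) (hiw : i ∉ w) :
      ident (collapse i N) (w.map gen).prod = gen N ^ w.length :=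
    map_prod_map_gen_of_forall_eq _ fun j hj => by
      rw [ident_gen, collapse, if_neg (ne_of_mem_of_not_mem hj hiw), if_pos (hlt j (hw hj))]
  have himage := hident _ (finSupp_collapse hiN) _ hL
  rw [List.map_append, List.map_cons, List.prod_append, List.prod_cons, map_mul, map_mul,
    hcollapse u (by simp) hiu, hcollapse v (by simp) hiv, ident_gen, collapse, if_pos rfl]
    at himage
  simp only [List.length_append, List.length_cons, Nat.even_add, Nat.even_add_one] at heven
  rcases Nat.even_or_odd u.length with hu | hu
  · have hv : Odd v.length := Nat.not_even_iff_odd.1 (heven.1 hu)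
    rw [gen_pow_of_even _ hu, gen_pow_of_odd _ hv, one_mul] at himage
    exact ⟨i, N, hiN.ne, himage⟩
  · have hv : Even v.length := not_not.1 (mt heven.2 (Nat.not_even_iff_odd.2 hu))
    rw [gen_pow_of_odd _ hu, gen_pow_of_even _ hv, mul_one] at himage
    exact ⟨N, i, hiN.ne', himage⟩

lemma forall_gen_mul_gen_mem_of_ne {H : Subgroup FP}
    (hident : ∀ f, FinSupp f → ∀ y ∈ H, ident f y ∈ H) {i m : ℕ} (him : i ≠ m)
    (h : gen i * gen m ∈ H) (j k : ℕ) : gen j * gen k ∈ H := by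
  let f (n : ℕ) : ℕ := if n = i then j else if n = m then k else n
  have hf : FinSupp f :=
    ⟨i + m + 1, fun n hn => by simp [f, show n ≠ i by omega, show n ≠ m by omega]⟩
  simpa [f, ident_gen, him.symm] using hident f hf _ h

/-- In a proper S₀-invariant subgroup of `Ev`, every letter occurring in the reduced
word of an element occurs at least twice. -/
theorem stmt4 (H : Subgroup FP) (hle : H ≤ Ev) (hproper : H ≠ Ev) (hinv : S0Inv H) :
    ∀ x ∈ H, ∀ i : ℕ, 1 ≤ occ x i → 2 ≤ occ x i := by
  intro x hx i hocc
  by_contra! hocc'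
  have hcount : (letters x).count i = 1 := show occ x i = 1 by omega
  have hxL : ((letters x).map gen).prod ∈ H := (prod_map_gen_letters x).symm ▸ hx
  have heven : Even (letters x).length := (prod_map_gen_mem_Ev_iff _).1 (hle hxL)
  obtain ⟨j, k, hjk, hmem⟩ := exists_ne_gen_mul_gen_mem_of_count_eq_one hinv.1 hxL heven hcount
  exact hproper (le_antisymm hle
    (Ev_le_of_forall_gen_mul_gen_mem (forall_gen_mul_gen_mem_of_ne hinv.1 hjk hmem)))

end
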